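/- For the symmetric interacting urn with a > 0, β > 0: L(x_1,x_2,x_3) = −(x_1+x_2+x_3) + (1/(2a+1))·[a·log(x_1 x_2 x_3) − ((a−1)/β)·log(x_1^β + x_2^β + x_3^β)] satisfies ∂L/∂x_i = F_i(x)/x_i for each i = 1,2,3 at every point with all x_i > 0 and x_1+x_2+x_3 = 1. -/

import Mathlib

noncomputable def symF (a β : ℝ) (i : Fin 3) (x₁ x₂ x₃ : ℝ) : ℝ :=
  let S := x₁ ^ β + x₂ ^ β + x₃ ^ β
  match i with
  | 0 => (x₁ ^ β + a * (x₂ ^ β + x₃ ^ β)) / ((1 + 2 * a) * S) - x₁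
  | 1 => (x₂ ^ β + a * (x₁ ^ β + x₃ ^ β)) / ((1 + 2 * a) * S) - x₂
  | 2 => (x₃ ^ β + a * (x₁ ^ β + x₂ ^ β)) / ((1 + 2 * a) * S) - x₃

noncomputable def L (a β x₁ x₂ x₃ : ℝ) : ℝ :=
  -(x₁ + x₂ + x₃) + (1 / (2 * a + 1)) *
    (a * Real.log (x₁ * x₂ * x₃) - ((a - 1) / β) * Real.log (x₁ ^ β + x₂ ^ β + x₃ ^ β))

/-!
`L` is a symmetric function of `(x₁, x₂, x₃)` and `F₂, F₃` are `F₁` with the variables permuted,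
so it suffices to differentiate in the first variable. There `∂L/∂x₁ = -1 + (a/x₁ - (a-1) x₁^(β-1)/S)/(2a+1)`
with `S = x₁^β + x₂^β + x₃^β`, and `F₁/x₁` equals this after writing `a (x₂^β + x₃^β) = a (S - x₁^β)`.
-/

open Real

section Symmetry

variable (a β x₁ x₂ x₃ : ℝ)

lemma L_swap_fst_snd : L a β x₁ x₂ x₃ = L a β x₂ x₁ x₃ := by
  simp only [L]
  ring_nf

lemma L_swap_fst_thd : L a β x₁ x₂ x₃ = L a β x₃ x₂ x₁ := by
  simp only [L]
  ring_nf

lemma symF_one_eq : symF a β 1 x₁ x₂ x₃ = symF a β 0 x₂ x₁ x₃ := by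
  simp only [symF]
  ring_nf

lemma symF_two_eq : symF a β 2 x₁ x₂ x₃ = symF a β 0 x₃ x₂ x₁ := by
  simp only [symF]
  ring_nf

end Symmetry

lemma hasDerivAt_L_fst {a β x y z : ℝ} (ha : 2 * a + 1 ≠ 0) (hβ : β ≠ 0)
    (hx : 0 < x) (hy : 0 < y) (hz : 0 < z) :
    HasDerivAt (fun t => L a β t y z) (symF a β 0 x y z / x) x := by
  have hS : 0 < x ^ β + y ^ β + z ^ β := by positivity
  have hlin : HasDerivAt (fun t : ℝ => -(t + y + z)) (-1) x :=
    (((hasDerivAt_id x).add_const y).add_const z).neg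
  have hprod : HasDerivAt (fun t : ℝ => t * y * z) (y * z) x := by
    simpa using ((hasDerivAt_id x).mul_const y).mul_const z
  have hpow : HasDerivAt (fun t : ℝ => t ^ β + y ^ β + z ^ β) (β * x ^ (β - 1)) x :=
    ((hasDerivAt_rpow_const (Or.inl hx.ne')).add_const _).add_const _
  have H := hlin.add ((((hprod.log (by positivity)).const_mul a).sub
    ((hpow.log hS.ne').const_mul ((a - 1) / β))).const_mul (1 / (2 * a + 1)))
  refine H.congr_deriv ?_
  simp only [symF]
  rw [rpow_sub hx, rpow_one]
  have ha' : 1 + 2 * a ≠ 0 := by rwa [add_comm]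
  field_simp
  ring

theorem L_partial_derivs_general (a β : ℝ) (ha : 0 < a) (hβ : 0 < β)
    (x₁ x₂ x₃ : ℝ) (h1 : 0 < x₁) (h2 : 0 < x₂) (h3 : 0 < x₃) :
    deriv (fun t => L a β t x₂ x₃) x₁ = symF a β 0 x₁ x₂ x₃ / x₁ ∧
    deriv (fun t => L a β x₁ t x₃) x₂ = symF a β 1 x₁ x₂ x₃ / x₂ ∧
    deriv (fun t => L a β x₁ x₂ t) x₃ = symF a β 2 x₁ x₂ x₃ / x₃ := by
  have ha' : 2 * a + 1 ≠ 0 := by positivity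
  refine ⟨(hasDerivAt_L_fst ha' hβ.ne' h1 h2 h3).deriv, ?_, ?_⟩
  · simp_rw [L_swap_fst_snd a β x₁, symF_one_eq]
    exact (hasDerivAt_L_fst ha' hβ.ne' h2 h1 h3).deriv
  · simp_rw [L_swap_fst_thd a β x₁, symF_two_eq]
    exact (hasDerivAt_L_fst ha' hβ.ne' h3 h2 h1).deriv

theorem L_partial_derivs (a β : ℝ) (ha : 0 < a) (hβ : 0 < β)
    (x₁ x₂ x₃ : ℝ) (h1 : 0 < x₁) (h2 : 0 < x₂) (h3 : 0 < x₃)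
    (hsum : x₁ + x₂ + x₃ = 1) :
    deriv (fun t => L a β t x₂ x₃) x₁ = symF a β 0 x₁ x₂ x₃ / x₁ ∧
    deriv (fun t => L a β x₁ t x₃) x₂ = symF a β 1 x₁ x₂ x₃ / x₂ ∧
    deriv (fun t => L a β x₁ x₂ t) x₃ = symF a β 2 x₁ x₂ x₃ / x₃ :=
  L_partial_derivs_general a β ha hβ x₁ x₂ x₃ h1 h2 h3
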